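/- arXiv:2101.02838 — 3 statements merged into one kernel-verified Lean document; each statement's English description precedes it below -/
import Mathlib

section
/- For a positive integer m, a finite connected simple graph G is a (1,m)-completeness-resolvable graph if and only if G is a path graph (necessarily with m+1 vertices). -/
open SimpleGraph

/-- `w` enumerates a `(k, m)`-completeness-resolving set of `G`:
`w` is injective, its range `W` is a proper subset of the vertex set, and the map
`u ↦ (dist (w 1) u, …, dist (w k) u)` is a bijection from `V ∖ W` onto `[m]^k`. -/
def IsCRS {V : Type*} (G : SimpleGraph V) {k : ℕ} (w : Fin k → V) (m : ℕ) : Prop :=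
  Function.Injective w ∧ Set.range w ≠ Set.univ ∧
    Function.Injective
      (fun u : {u : V // u ∉ Set.range w} => fun i : Fin k => G.dist (w i) u.1) ∧
    Set.range (fun u : {u : V // u ∉ Set.range w} => fun i : Fin k => G.dist (w i) u.1) =
      {x : Fin k → ℕ | ∀ i, 1 ≤ x i ∧ x i ≤ m}

/-- `G` is a `(k, m)`-completeness-resolvable graph. -/
def IsCRG {V : Type*} (G : SimpleGraph V) (k m : ℕ) : Prop :=
  ∃ w : Fin k → V, IsCRS G w m

/-- `G` is completeness-resolvable. -/
def CompletenessResolvable {V : Type*} (G : SimpleGraph V) : Prop :=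
  ∃ (k m : ℕ) (w : Fin k → V), IsCRS G w m

/-! ### The family `B_k`.
Tuples in `[2]^k` are modelled as functions `Fin k → Fin 2`, the `Fin 2`-value `j`
corresponding to the entry `j + 1 ∈ {1, 2}`. -/

/-- The graph `H1 ∘ H2` on `[k] ⊔ [2]^k`. -/
def comp2 {k : ℕ} (H1 : SimpleGraph (Fin k)) (H2 : SimpleGraph (Fin k → Fin 2)) :
    SimpleGraph (Fin k ⊕ (Fin k → Fin 2)) where
  Adj a b :=
    match a, b with
    | Sum.inl i, Sum.inl j => H1.Adj i j
    | Sum.inr x, Sum.inr y => H2.Adj x y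
    | Sum.inl i, Sum.inr x => x i = 0
    | Sum.inr x, Sum.inl i => x i = 0
  symm := by
    constructor
    rintro (i | x) (j | y) h
    · exact H1.adj_symm h
    · exact h
    · exact h
    · exact H2.adj_symm h
  loopless := by
    constructor
    rintro (i | x) h
    · exact H1.irrefl h
    · exact H2.irrefl h

/-- The defining condition of `B_k`: for each `i`, the edges of `H2` lying in the complete
bipartite graph `B_i^k` (i.e. joining a tuple with `i`-th entry `1` to one with `i`-th entry `2`)
cover every tuple all of whose entries on the closed neighbourhood of `i` in `H1` equal `2`. -/
def BCond {k : ℕ} (H1 : SimpleGraph (Fin k)) (H2 : SimpleGraph (Fin k → Fin 2)) : Prop :=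
  ∀ (i : Fin k) (x : Fin k → Fin 2),
    (∀ j : Fin k, (j = i ∨ H1.Adj i j) → x j = 1) →
    ∃ y : Fin k → Fin 2, H2.Adj x y ∧ y i ≠ x i

/-- The family `B_k`, as a set of graphs on `[k] ⊔ [2]^k`. -/
def Bset (k : ℕ) : Set (SimpleGraph (Fin k ⊕ (Fin k → Fin 2))) :=
  {G | ∃ H1 H2, BCond H1 H2 ∧ G = comp2 H1 H2}

/-- `H2` is `H1`-minimal. -/
def H1Minimal {k : ℕ} (H1 : SimpleGraph (Fin k)) (H2 : SimpleGraph (Fin k → Fin 2)) : Prop :=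
  comp2 H1 H2 ∈ Bset k ∧
    ∀ H2' : SimpleGraph (Fin k → Fin 2), H2' < H2 → comp2 H1 H2' ∉ Bset k

/-- The graph `U_k` on `[2]^k`, with unique edge `{(1,…,1), (2,…,2)}`. -/
def Uk (k : ℕ) : SimpleGraph (Fin k → Fin 2) :=
  SimpleGraph.fromEdgeSet {s(fun _ => (0 : Fin 2), fun _ => (1 : Fin 2))}

/-- The graph `V_k` on `[2]^k`, whose edges join `(2,…,2)` to the tuples having exactly one
entry equal to `1`. -/
def Vk (k : ℕ) : SimpleGraph (Fin k → Fin 2) :=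
  SimpleGraph.fromEdgeSet
    {e | ∃ i : Fin k, e = s(Function.update (fun _ => (1 : Fin 2)) i 0, fun _ => (1 : Fin 2))}

/-- The graph `R_k` on `[2]^k`: the perfect matching pairing each tuple with its complement. -/
def Rk (k : ℕ) : SimpleGraph (Fin k → Fin 2) :=
  SimpleGraph.fromRel fun x y => ∀ i, x i ≠ y i

/-- The hypercube graph `Q_k` on `[2]^k`: tuples are adjacent when they differ in exactly one
coordinate. -/
def Qk (k : ℕ) : SimpleGraph (Fin k → Fin 2) :=
  SimpleGraph.fromRel fun x y => ∃ i, x i ≠ y i ∧ ∀ j, j ≠ i → x j = y j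

/-! ### The family `C_k`.
Tuples in `[3]^k` are modelled as functions `Fin k → Fin 3`, the `Fin 3`-value `j`
corresponding to the entry `j + 1 ∈ {1, 2, 3}`. -/

/-- Entries `a` and `b` (of `{1,2,3}`, coded in `Fin 3`) satisfy `|a - b| ≤ 1`. -/
def near3 (a b : Fin 3) : Prop := (a : ℕ) ≤ (b : ℕ) + 1 ∧ (b : ℕ) ≤ (a : ℕ) + 1

/-- `{x, y}` is an edge of the bipartite graph `C_i^k` (between `i`-th entry `1` and
`i`-th entry `2`, with all other entries differing by at most `1`). -/
def CAdj {k : ℕ} (i : Fin k) (x y : Fin k → Fin 3) : Prop :=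
  ((x i = 0 ∧ y i = 1) ∨ (x i = 1 ∧ y i = 0)) ∧ ∀ t, t ≠ i → near3 (x t) (y t)

/-- `{x, y}` is an edge of the bipartite graph `D_i^k` (between `i`-th entry `2` and
`i`-th entry `3`, with all other entries differing by at most `1`). -/
def DAdj {k : ℕ} (i : Fin k) (x y : Fin k → Fin 3) : Prop :=
  ((x i = 1 ∧ y i = 2) ∨ (x i = 2 ∧ y i = 1)) ∧ ∀ t, t ≠ i → near3 (x t) (y t)

/-- The graph `K̄_[k] ∘ H2` on `[k] ⊔ [3]^k`. -/
def comp3 {k : ℕ} (H2 : SimpleGraph (Fin k → Fin 3)) :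
    SimpleGraph (Fin k ⊕ (Fin k → Fin 3)) where
  Adj a b :=
    match a, b with
    | Sum.inl _, Sum.inl _ => False
    | Sum.inr x, Sum.inr y => H2.Adj x y
    | Sum.inl i, Sum.inr x => x i = 0
    | Sum.inr x, Sum.inl i => x i = 0
  symm := by
    constructor
    rintro (i | x) (j | y) h
    · exact h
    · exact h
    · exact h
    · exact H2.adj_symm h
  loopless := by
    constructor
    rintro (i | x) h
    · exact h
    · exact H2.irrefl h

/-- The defining condition of `C_k`: every edge of `H2` lies in some `C_i^k` or `D_i^k`;
for each `i` the edges of `H2` in `C_i^k` cover `[3]^k_i(2)`, and the edges of `H2` in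
`D_i^k` cover `S_i^k`. -/
def CCond {k : ℕ} (H2 : SimpleGraph (Fin k → Fin 3)) : Prop :=
  (∀ x y, H2.Adj x y → ∃ i, CAdj i x y ∨ DAdj i x y) ∧
  (∀ (i : Fin k) (x : Fin k → Fin 3), x i = 1 → ∃ y, H2.Adj x y ∧ CAdj i x y) ∧
  (∀ (i : Fin k) (x : Fin k → Fin 3), x i = 2 → (∀ t, x t ≠ 0) →
    ∃ y, H2.Adj x y ∧ DAdj i x y)

/-- The family `C_k`, as a set of graphs on `[k] ⊔ [3]^k`. -/
def Cset (k : ℕ) : Set (SimpleGraph (Fin k ⊕ (Fin k → Fin 3))) :=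
  {G | ∃ H2, CCond H2 ∧ G = comp3 H2}

/-- The graph `Γ_k` on `[3]^k`: distinct tuples are adjacent when all their entries differ
by at most `1`. -/
def GammaK (k : ℕ) : SimpleGraph (Fin k → Fin 3) :=
  SimpleGraph.fromRel fun x y => ∀ i, near3 (x i) (y i)

/-- `H2` is `k`-minimal. -/
def KMinimalC {k : ℕ} (H2 : SimpleGraph (Fin k → Fin 3)) : Prop :=
  comp3 H2 ∈ Cset k ∧
    ∀ H2' : SimpleGraph (Fin k → Fin 3), H2' < H2 → comp3 H2' ∉ Cset k

/-! For `W = {v}` the resolving condition says exactly that `u ↦ dist v u` is a bijection from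
`V` onto `{0, …, m}`. Once the distance from `v` is injective, adjacent vertices have distances
differing by exactly one (equal distances would force them to coincide), and conversely the
predecessor of `b` on a geodesic from `v` is the unique vertex at distance `dist v b - 1`. So that
bijection is an isomorphism onto the path graph; conversely in a path graph the distance from an
end vertex is the position along the path. -/

namespace SimpleGraph

variable {V V' : Type*} {G : SimpleGraph V} {G' : SimpleGraph V'}

lemma Hom.edist_le (f : G →g G') (u v : V) : G'.edist (f u) (f v) ≤ G.edist u v := by
  by_cases hr : G.Reachable u v
  · obtain ⟨p, hp⟩ := hr.exists_walk_length_eq_edist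
    exact hp ▸ (p.length_map f) ▸ SimpleGraph.edist_le (p.map f)
  · exact edist_eq_top_of_not_reachable hr ▸ le_top

lemma Iso.edist_eq (f : G ≃g G') (u v : V) : G'.edist (f u) (f v) = G.edist u v :=
  le_antisymm (Hom.edist_le f.toHom u v) <| by
    simpa using Hom.edist_le f.symm.toHom (f u) (f v)

lemma Iso.dist_eq (f : G ≃g G') (u v : V) : G'.dist (f u) (f v) = G.dist u v := by
  rw [dist, dist, f.edist_eq]

lemma le_add_length_of_walk_pathGraph {n : ℕ} {a b : Fin n} (p : (pathGraph n).Walk a b) :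
    (b : ℕ) ≤ a + p.length := by
  induction p with
  | nil => simp
  | cons h _ ih =>
    rw [pathGraph_adj] at h
    rw [Walk.length_cons]
    omega

lemma pathGraph_dist_zero {n : ℕ} (j : Fin (n + 1)) : (pathGraph (n + 1)).dist 0 j = j := by
  refine le_antisymm ?_ ?_
  · induction j using Fin.induction with
    | zero => simp
    | succ i ih =>
      have hadj : (pathGraph (n + 1)).Adj i.castSucc i.succ := pathGraph_adj.2 (.inl rfl)
      calc (pathGraph (n + 1)).dist 0 i.succ
          ≤ (pathGraph (n + 1)).dist 0 i.castSucc + (pathGraph (n + 1)).dist i.castSucc i.succ :=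
            hadj.reachable.dist_triangle_right 0
        _ ≤ i.succ := by simp only [dist_eq_one_iff_adj.2 hadj]; simpa using ih
  · obtain ⟨p, hp⟩ := (pathGraph_connected n).exists_walk_length_eq_dist 0 j
    simpa [hp] using le_add_length_of_walk_pathGraph p

lemma exists_adj_dist_add_one_eq {u w : V} (h : G.dist u w ≠ 0) :
    ∃ z, G.Adj z w ∧ G.dist u z + 1 = G.dist u w := by
  obtain ⟨p, hp⟩ := exists_walk_of_dist_ne_zero h
  have hnil : ¬p.Nil := fun hnil => h (by rw [← hp, hnil.length_eq_zero])
  have hadj := p.adj_penultimate hnil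
  refine ⟨p.penultimate, hadj, le_antisymm ?_ ?_⟩
  · have := dist_le p.dropLast
    have := p.length_dropLast_add_one hnil
    omega
  · exact hadj.reachable.dist_triangle_right u |>.trans (by rw [dist_eq_one_iff_adj.2 hadj])

lemma adj_of_dist_add_one_eq {v a b : V} (hinj : Function.Injective (G.dist v))
    (h : G.dist v a + 1 = G.dist v b) : G.Adj a b := by
  obtain ⟨z, hz, hdist⟩ := exists_adj_dist_add_one_eq (G := G) (u := v) (w := b) (by omega)
  obtain rfl : z = a := hinj (by omega)
  exact hz

lemma adj_iff_of_injective_dist {v a b : V} (hinj : Function.Injective (G.dist v)) :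
    G.Adj a b ↔ G.dist v a + 1 = G.dist v b ∨ G.dist v b + 1 = G.dist v a := by
  refine ⟨fun h => ?_, ?_⟩
  · have hne : G.dist v a ≠ G.dist v b := fun heq => G.ne_of_adj h (hinj heq)
    rcases h.diff_dist_adj (u := v) with h | h | h <;> omega
  · rintro (h | h)
    exacts [adj_of_dist_add_one_eq hinj h, (adj_of_dist_add_one_eq hinj h).symm]

def isoPathGraphOfDistEq {v : V} {m : ℕ} (e : V ≃ Fin (m + 1))
    (he : ∀ u, (e u : ℕ) = G.dist v u) : G ≃g pathGraph (m + 1) where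
  toEquiv := e
  map_rel_iff' {a b} := by
    have hinj : Function.Injective (G.dist v) := fun a b h =>
      e.injective (Fin.ext (by simp [he, h]))
    rw [pathGraph_adj, he, he, adj_iff_of_injective_dist hinj]

lemma dist_symm_zero_eq {m : ℕ} (f : G ≃g pathGraph (m + 1)) (u : V) :
    G.dist (f.symm 0) u = f u := by
  rw [← f.dist_eq, RelIso.apply_symm_apply, pathGraph_dist_zero]

end SimpleGraph

section CompletenessResolving

variable {V : Type*} {G : SimpleGraph V} {v : V} {m : ℕ}

lemma IsCRS.dist_mem_Icc (hw : IsCRS G (fun _ : Fin 1 => v) m) {u : V} (hu : u ≠ v) :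
    G.dist v u ∈ Set.Icc 1 m := by
  have hmem : (fun _ : Fin 1 => G.dist v u) ∈ {x : Fin 1 → ℕ | ∀ i, 1 ≤ x i ∧ x i ≤ m} :=
    hw.2.2.2 ▸ ⟨⟨u, by simpa using hu⟩, rfl⟩
  exact hmem 0

lemma IsCRS.injective_dist (hw : IsCRS G (fun _ : Fin 1 => v) m) :
    Function.Injective (G.dist v) := by
  have hzero : ∀ u, G.dist v u = 0 → u = v := fun u hu => by
    by_contra hne
    exact absurd (hw.dist_mem_Icc hne).1 (by omega)
  intro a b hab
  by_cases ha : a = v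
  · subst ha; exact (hzero b (by rw [← hab, SimpleGraph.dist_self])).symm
  by_cases hb : b = v
  · subst hb; exact hzero a (by rw [hab, SimpleGraph.dist_self])
  exact congrArg Subtype.val
    (@hw.2.2.1 ⟨a, by simpa using ha⟩ ⟨b, by simpa using hb⟩ (funext fun _ => hab))

lemma IsCRS.exists_dist_eq (hw : IsCRS G (fun _ : Fin 1 => v) m) {j : ℕ} (hj : j ≤ m) :
    ∃ u, G.dist v u = j := by
  rcases Nat.eq_zero_or_pos j with rfl | hpos
  · exact ⟨v, SimpleGraph.dist_self⟩
  have hj' : (fun _ : Fin 1 => j) ∈ {x : Fin 1 → ℕ | ∀ i, 1 ≤ x i ∧ x i ≤ m} :=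
    fun _ => ⟨hpos, hj⟩
  rw [← hw.2.2.2] at hj'
  obtain ⟨u, hu⟩ := hj'
  exact ⟨u, congrFun hu 0⟩

lemma IsCRS.exists_equiv_dist (hw : IsCRS G (fun _ : Fin 1 => v) m) :
    ∃ e : V ≃ Fin (m + 1), ∀ u, (e u : ℕ) = G.dist v u := by
  have hlt : ∀ u, G.dist v u < m + 1 := fun u => by
    by_cases hu : u = v
    · simp [hu]
    · have := hw.dist_mem_Icc hu; simp only [Set.mem_Icc] at this; omega
  refine ⟨Equiv.ofBijective (fun u => ⟨G.dist v u, hlt u⟩)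
    ⟨fun a b h => hw.injective_dist (congrArg Fin.val h), fun j => ?_⟩, fun u => rfl⟩
  obtain ⟨u, hu⟩ := hw.exists_dist_eq (Nat.lt_succ_iff.1 j.2)
  exact ⟨u, Fin.ext hu⟩

lemma isCRS_of_equiv_dist (hm : 1 ≤ m) (e : V ≃ Fin (m + 1))
    (he : ∀ u, (e u : ℕ) = G.dist v u) : IsCRS G (fun _ : Fin 1 => v) m := by
  have hzero : ∀ u, G.dist v u = 0 ↔ u = v := fun u => by
    rw [← he, ← e.apply_eq_iff_eq, Fin.ext_iff, he, he, SimpleGraph.dist_self]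
  have hmem_range : ∀ u, u ∉ Set.range (fun _ : Fin 1 => v) ↔ G.dist v u ≠ 0 := by
    simp [hzero, eq_comm]
  have hdist_symm : ∀ j : Fin (m + 1), G.dist v (e.symm j) = j := fun j => by simp [← he]
  refine ⟨Function.injective_of_subsingleton _, fun h => ?_, fun a b hab => ?_, ?_⟩
  · refine (hmem_range (e.symm ⟨1, by omega⟩)).2 ?_ (h ▸ Set.mem_univ _)
    simp [hdist_symm]
  · exact Subtype.ext (e.injective (Fin.ext (by rw [he, he]; exact congrFun hab 0)))
  ext x
  constructor
  · rintro ⟨⟨u, hu⟩, rfl⟩ _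
    have hlt : G.dist v u < m + 1 := he u ▸ (e u).2
    exact ⟨Nat.one_le_iff_ne_zero.2 ((hmem_range u).1 hu), Nat.lt_succ_iff.1 hlt⟩
  · intro hx
    obtain ⟨hpos, hle⟩ := hx 0
    have hu : G.dist v (e.symm ⟨x 0, by omega⟩) = x 0 := hdist_symm _
    refine ⟨⟨_, (hmem_range _).2 (by rw [hu]; omega)⟩, funext fun i => ?_⟩
    rw [Subsingleton.elim i 0]
    exact hu

end CompletenessResolving

theorem isCRG_one_iff_general {V : Type*} (m : ℕ) (hm : 1 ≤ m) (G : SimpleGraph V) :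
    IsCRG G 1 m ↔ Nonempty (G ≃g SimpleGraph.pathGraph (m + 1)) := by
  constructor
  · rintro ⟨w, hw⟩
    rw [eq_const_of_unique w] at hw
    obtain ⟨e, he⟩ := hw.exists_equiv_dist
    exact ⟨isoPathGraphOfDistEq e he⟩
  · rintro ⟨f⟩
    exact ⟨_, isCRS_of_equiv_dist hm f.toEquiv fun u => (dist_symm_zero_eq f u).symm⟩

/-- **Proposition.** For a positive integer `m`, a finite connected simple graph `G` is a
`(1,m)`-CRG iff `G` is a path graph (necessarily on `m + 1` vertices). -/
theorem isCRG_one_iff {V : Type*} [Fintype V] (m : ℕ) (hm : 1 ≤ m) (G : SimpleGraph V)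
    (hconn : G.Connected) (hcard : 2 ≤ Fintype.card V) :
    IsCRG G 1 m ↔ Nonempty (G ≃g SimpleGraph.pathGraph (m + 1)) :=
  isCRG_one_iff_general m hm G
end

section
/- Let k ≥ 2 and let H = H1∘H2 be a graph in B_k. Then for every i ∈ [k] and every x ∈ [2]^k, the distance in H between the vertex i and the vertex x equals x_(i). -/
open SimpleGraph

/-!
A vertex `i` is adjacent to `x` exactly when `x_(i) = 1`. When `x_(i) = 2`, the vertices `i` and
`x` are not adjacent but have a common neighbour: either some `H1`-neighbour `j` of `i` has
`x_(j) = 1`, or `x` is `2` on all of `H1(i)`, and then the covering condition of `B_k` gives an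
`H2`-neighbour `y` of `x` with `y_(i) = 1`.
-/

namespace SimpleGraph

variable {V : Type*} {G : SimpleGraph V} {u v : V}

theorem dist_eq_two_of_commonNeighbors_nonempty (huv : u ≠ v) (hnadj : ¬G.Adj u v)
    (hcommon : (G.commonNeighbors u v).Nonempty) : G.dist u v = 2 := by
  simp [dist, edist_eq_two_iff.mpr ⟨huv, hnadj, hcommon⟩]

end SimpleGraph

section comp2

variable {k : ℕ} {H1 : SimpleGraph (Fin k)} {H2 : SimpleGraph (Fin k → Fin 2)}

@[simp]
theorem comp2_adj_inl_inr {i : Fin k} {x : Fin k → Fin 2} :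
    (comp2 H1 H2).Adj (.inl i) (.inr x) ↔ x i = 0 :=
  Iff.rfl

theorem BCond.commonNeighbors_inl_inr_nonempty (hB : BCond H1 H2) {i : Fin k}
    {x : Fin k → Fin 2} (hxi : x i = 1) :
    ((comp2 H1 H2).commonNeighbors (.inl i) (.inr x)).Nonempty := by
  by_cases hj : ∃ j, H1.Adj i j ∧ x j = 0
  · obtain ⟨j, hij, hxj⟩ := hj
    exact ⟨.inl j, (mem_commonNeighbors _).mpr ⟨hij, hxj⟩⟩
  · have hx_nbhd : ∀ j, (j = i ∨ H1.Adj i j) → x j = 1 := by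
      rintro j (rfl | hij)
      · exact hxi
      · exact Fin.eq_one_of_ne_zero _ fun hxj => hj ⟨j, hij, hxj⟩
    obtain ⟨y, hxy, hyx⟩ := hB i x hx_nbhd
    have hyi : y i = 0 := by
      by_contra hyi
      exact hyx (by rw [Fin.eq_one_of_ne_zero _ hyi, hxi])
    exact ⟨.inr y, (mem_commonNeighbors _).mpr ⟨hyi, hxy⟩⟩

theorem BCond.dist_comp2_inl_inr (hB : BCond H1 H2) (i : Fin k) (x : Fin k → Fin 2) :
    (comp2 H1 H2).dist (.inl i) (.inr x) = (x i : ℕ) + 1 := by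
  by_cases hxi0 : x i = 0
  · rw [hxi0]
    exact dist_eq_one_iff_adj.mpr hxi0
  · have hxi : x i = 1 := Fin.eq_one_of_ne_zero _ hxi0
    rw [hxi]
    refine dist_eq_two_of_commonNeighbors_nonempty Sum.inl_ne_inr ?_
      (hB.commonNeighbors_inl_inr_nonempty hxi)
    simp [hxi]

end comp2

theorem dist_comp2_general (k : ℕ) (H1 : SimpleGraph (Fin k))
    (H2 : SimpleGraph (Fin k → Fin 2)) (h : comp2 H1 H2 ∈ Bset k)
    (i : Fin k) (x : Fin k → Fin 2) :
    (comp2 H1 H2).dist (Sum.inl i) (Sum.inr x) = (x i : ℕ) + 1 := by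
  obtain ⟨H1', H2', hB, hEq⟩ := h
  rw [hEq]
  exact hB.dist_comp2_inl_inr i x

/-- **Lemma.** If `H = H1 ∘ H2 ∈ B_k` (`k ≥ 2`), then for every `i ∈ [k]` and `x ∈ [2]^k`,
the distance in `H` from `i` to `x` equals `x_(i)` (the `Fin 2`-value `x i` codes the entry
`(x i : ℕ) + 1`). -/
theorem dist_comp2 (k : ℕ) (hk : 2 ≤ k) (H1 : SimpleGraph (Fin k))
    (H2 : SimpleGraph (Fin k → Fin 2)) (h : comp2 H1 H2 ∈ Bset k)
    (i : Fin k) (x : Fin k → Fin 2) :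
    (comp2 H1 H2).dist (Sum.inl i) (Sum.inr x) = (x i : ℕ) + 1 :=
  dist_comp2_general k H1 H2 h i x
end

section
/- Let k ≥ 2 and let H be a graph in B_k. Then H is a (k,2)-completeness-resolvable graph; in fact the set [k] of vertices is a (k,2)-completeness-resolving set of H. -/
open SimpleGraph

open SimpleGraph

/-!
Seen from a vertex `i ∈ [k]`, a tuple `x ∈ [2]^k` is at distance `1` when `x_(i) = 1` and
otherwise at distance `2`: if some `j ∈ H1(i)` has `x_(j) = 1`, then `j ≠ i` is a common
neighbour of `i` and `x`; if not, `x ∈ [2]^k_{H1(i)}(2)`, and the covering condition of `B_k`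
gives an `H2`-neighbour `y` of `x` with `y_(i) = 1`. Hence the distance vector of `x` to `[k]`
is `x` itself.
-/

namespace SimpleGraph

variable {V : Type*} {G : SimpleGraph V} {u v : V}

lemma dist_eq_two_iff :
    G.dist u v = 2 ↔ u ≠ v ∧ ¬G.Adj u v ∧ (G.commonNeighbors u v).Nonempty := by
  rw [dist, ENat.toNat_eq_iff two_ne_zero]
  exact_mod_cast edist_eq_two_iff

end SimpleGraph

lemma range_fun_val_add_one (ι : Type*) (m : ℕ) :
    Set.range (fun (x : ι → Fin m) i => (x i : ℕ) + 1) =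
      {f | ∀ i, 1 ≤ f i ∧ f i ≤ m} := by
  ext f
  constructor
  · rintro ⟨x, rfl⟩ i
    exact ⟨Nat.le_add_left 1 _, (x i).isLt⟩
  · intro hf
    refine ⟨fun i => ⟨f i - 1, by have := hf i; omega⟩, funext fun i => ?_⟩
    have := hf i
    simp only
    omega

lemma isCRS_inl_of_dist_eq {k m : ℕ} (hm : 0 < m) (G : SimpleGraph (Fin k ⊕ (Fin k → Fin m)))
    (hdist : ∀ i x, G.dist (Sum.inl i) (Sum.inr x) = (x i : ℕ) + 1) : IsCRS G Sum.inl m := by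
  have hinr : ∀ x, (Sum.inr x : Fin k ⊕ (Fin k → Fin m)) ∉ Set.range Sum.inl := by
    rintro x ⟨i, hi⟩
    exact Sum.inl_ne_inr hi
  have hcompl : ∀ u ∉ Set.range (Sum.inl : Fin k → Fin k ⊕ (Fin k → Fin m)),
      ∃ x, Sum.inr x = u := fun u hu => by
    rwa [← Set.mem_compl_iff, Set.compl_range_inl] at hu
  refine ⟨Sum.inl_injective, fun huniv => hinr (fun _ => ⟨0, hm⟩) (huniv ▸ Set.mem_univ _),
    ?_, ?_⟩
  · rintro ⟨u, hu⟩ ⟨v, hv⟩ huv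
    obtain ⟨x, rfl⟩ := hcompl u hu
    obtain ⟨y, rfl⟩ := hcompl v hv
    refine Subtype.ext (congrArg Sum.inr (funext fun i => Fin.ext ?_))
    simpa only [hdist, Nat.add_right_cancel_iff] using congrFun huv i
  · rw [← range_fun_val_add_one]
    ext f
    constructor
    · rintro ⟨⟨u, hu⟩, rfl⟩
      obtain ⟨x, rfl⟩ := hcompl u hu
      exact ⟨x, funext fun i => (hdist i x).symm⟩
    · rintro ⟨x, rfl⟩
      exact ⟨⟨Sum.inr x, hinr x⟩, funext fun i => hdist i x⟩

namespace BCond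

variable {k : ℕ} {H1 : SimpleGraph (Fin k)} {H2 : SimpleGraph (Fin k → Fin 2)}

lemma commonNeighbors_comp2_nonempty (hB : BCond H1 H2) {i : Fin k} {x : Fin k → Fin 2}
    (hx : x i = 1) : ((comp2 H1 H2).commonNeighbors (Sum.inl i) (Sum.inr x)).Nonempty := by
  by_cases hcov : ∀ j, (j = i ∨ H1.Adj i j) → x j = 1
  · obtain ⟨y, hxy, hyi⟩ := hB i x hcov
    have hy : y i = 0 := by omega
    exact ⟨Sum.inr y, (mem_commonNeighbors _).2 ⟨hy, hxy⟩⟩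
  · push Not at hcov
    obtain ⟨j, hj, hxj⟩ := hcov
    have hij : H1.Adj i j := hj.resolve_left (by rintro rfl; exact hxj hx)
    have hxj' : x j = 0 := by omega
    exact ⟨Sum.inl j, (mem_commonNeighbors _).2 ⟨hij, hxj'⟩⟩

lemma dist_comp2_inl_inr_s7 (hB : BCond H1 H2) (i : Fin k) (x : Fin k → Fin 2) :
    (comp2 H1 H2).dist (Sum.inl i) (Sum.inr x) = (x i : ℕ) + 1 := by
  obtain hx | hx : x i = 0 ∨ x i = 1 := by omega
  · rw [hx]
    exact dist_eq_one_iff_adj.2 hx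
  · rw [hx]
    exact dist_eq_two_iff.2 ⟨Sum.inl_ne_inr, fun hadj => one_ne_zero (hx.symm.trans hadj),
      hB.commonNeighbors_comp2_nonempty hx⟩

end BCond

theorem mem_Bset_isCRG_general (k : ℕ) (H : SimpleGraph (Fin k ⊕ (Fin k → Fin 2)))
    (h : H ∈ Bset k) :
    IsCRG H k 2 ∧ IsCRS H (fun i : Fin k => (Sum.inl i : Fin k ⊕ (Fin k → Fin 2))) 2 := by
  obtain ⟨H1, H2, hB, rfl⟩ := h
  have hW : IsCRS (comp2 H1 H2) Sum.inl 2 :=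
    isCRS_inl_of_dist_eq two_pos _ hB.dist_comp2_inl_inr_s7
  exact ⟨⟨_, hW⟩, hW⟩

/-- **Lemma.** Every graph `H ∈ B_k` (`k ≥ 2`) is a `(k,2)`-CRG; in fact the set `[k]` of
vertices is a `(k,2)`-completeness-resolving set of `H`. -/
theorem mem_Bset_isCRG (k : ℕ) (hk : 2 ≤ k) (H : SimpleGraph (Fin k ⊕ (Fin k → Fin 2)))
    (h : H ∈ Bset k) :
    IsCRG H k 2 ∧ IsCRS H (fun i : Fin k => (Sum.inl i : Fin k ⊕ (Fin k → Fin 2))) 2 :=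
  mem_Bset_isCRG_general k H h
end
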